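/- arXiv:1310.1596 — 5 statements merged into one kernel-verified Lean document; each statement's English description precedes it below -/
import Mathlib

section
/- For any field k and any natural numbers m, N, the ∘-product of two block matrices, defined by (A ∘ P) = diag(A,1_N,1_M) · σ(P) where σ embeds P into the blocks (1,3) relative to the splitting m+N+N+M, satisfies: if A' = H A H^{-1} with H = diag(1_m, h) for some invertible h, then A' ∘ P is conjugate to A ∘ P by a matrix of the form diag(1_m, h') with h' invertible. (Well-definedness of the ∘-multiplication on conjugacy classes with respect to the first factor.) -/
open Matrix

section Prelude

variable {R : Type*}

def blk3 {i1 i2 i3 j1 j2 j3 : Type*}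
    (A : Matrix i1 j1 R) (B : Matrix i1 j2 R) (C : Matrix i1 j3 R)
    (D : Matrix i2 j1 R) (E : Matrix i2 j2 R) (F : Matrix i2 j3 R)
    (G : Matrix i3 j1 R) (H : Matrix i3 j2 R) (J : Matrix i3 j3 R) :
    Matrix (i1 ⊕ (i2 ⊕ i3)) (j1 ⊕ (j2 ⊕ j3)) R :=
  Matrix.fromBlocks A (Matrix.fromCols B C) (Matrix.fromRows D G)
    (Matrix.fromBlocks E F H J)

/-- The data of a square matrix split into 3×3 blocks with diagonal index types
`i1`, `i2`, `i3`. -/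
structure Blk (R i1 i2 i3 : Type*) where
  a : Matrix i1 i1 R
  b : Matrix i1 i2 R
  c : Matrix i1 i3 R
  d : Matrix i2 i1 R
  e : Matrix i2 i2 R
  f : Matrix i2 i3 R
  g : Matrix i3 i1 R
  h : Matrix i3 i2 R
  j : Matrix i3 i3 R

def Blk.toMatrix {i1 i2 i3 : Type*} (M : Blk R i1 i2 i3) :
    Matrix (i1 ⊕ (i2 ⊕ i3)) (i1 ⊕ (i2 ⊕ i3)) R :=
  blk3 M.a M.b M.c M.d M.e M.f M.g M.h M.j

/-- The ⋆-product of the paper, on the level of block data: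
`A ⋆ P` is the `(j1+i1)+m+(i3+j3)` block matrix
`[[p,0,q,0,r],[bu,a,bv,c,bw],[eu,d,ev,f,ew],[hu,g,hv,j,hw],[x,0,y,0,z]]`. -/
def starB [CommRing R] {i1 m i3 j1 j3 : Type*} [Fintype m]
    (A : Blk R i1 m i3) (P : Blk R j1 m j3) : Blk R (j1 ⊕ i1) m (i3 ⊕ j3) where
  a := Matrix.fromBlocks P.a 0 (A.b * P.d) A.a
  b := Matrix.fromRows P.b (A.b * P.e)
  c := Matrix.fromBlocks 0 P.c A.c (A.b * P.f)
  d := Matrix.fromCols (A.e * P.d) A.d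
  e := A.e * P.e
  f := Matrix.fromCols A.f (A.e * P.f)
  g := Matrix.fromBlocks (A.h * P.d) A.g P.g 0
  h := Matrix.fromRows (A.h * P.e) P.h
  j := Matrix.fromBlocks A.j (A.h * P.f) 0 P.j

/-- The subgroup `P` of block matrices `[[α,φ,θ],[0,1,ψ],[0,0,β]]` with `α`, `β`
invertible. -/
def Pset (R : Type*) [CommRing R] (i1 i2 i3 : Type*)
    [Fintype i1] [Fintype i3] [DecidableEq i1] [DecidableEq i2] [DecidableEq i3] :
    Set (Matrix (i1 ⊕ (i2 ⊕ i3)) (i1 ⊕ (i2 ⊕ i3)) R) :=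
  {gm | ∃ (α : Matrix i1 i1 R) (φ : Matrix i1 i2 R) (θ : Matrix i1 i3 R)
      (ψ : Matrix i2 i3 R) (β : Matrix i3 i3 R),
    IsUnit α ∧ IsUnit β ∧ gm = blk3 α φ θ 0 1 ψ 0 0 β}

end Prelude

/-- The `∘`-product of `[[a,b],[c,d]]` (size `m+i`) and `[[p,q],[r,t]]` (size `m+j`):
the block matrix `[[ap,b,aq],[cp,d,cq],[r,0,t]]` of size `m+i+j`. -/
def circ {R : Type*} [CommRing R] {m i j : Type*} [Fintype m]
    (a : Matrix m m R) (b : Matrix m i R) (c : Matrix i m R) (d : Matrix i i R)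
    (p : Matrix m m R) (q : Matrix m j R) (r : Matrix j m R) (t : Matrix j j R) :
    Matrix (m ⊕ (i ⊕ j)) (m ⊕ (i ⊕ j)) R :=
  blk3 (a * p) b (a * q) (c * p) d (c * q) r 0 t

theorem Matrix.inv_fromBlocks_zero_zero {α l n : Type*} [CommRing α] [Fintype l] [Fintype n]
    [DecidableEq l] [DecidableEq n] {A : Matrix l l α} {D : Matrix n n α}
    (hA : IsUnit A) (hD : IsUnit D) :
    (fromBlocks A 0 0 D)⁻¹ = fromBlocks A⁻¹ 0 0 D⁻¹ := by
  simp [inv_fromBlocks_zero₂₁_of_isUnit_iff A 0 D (iff_of_true hA hD)]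

/-- The `(3,2)` block of `circ` is zero, so the sandwich leaves the second factor untouched. -/
theorem fromBlocks_mul_circ_mul_fromBlocks {R : Type*} [CommRing R] {m i j : Type*}
    [Fintype m] [Fintype i] [Fintype j] [DecidableEq m] [DecidableEq j]
    (a : Matrix m m R) (b : Matrix m i R) (c : Matrix i m R) (d : Matrix i i R)
    (p : Matrix m m R) (q : Matrix m j R) (r : Matrix j m R) (t : Matrix j j R)
    (u v : Matrix i i R) :
    fromBlocks 1 0 0 (fromBlocks u 0 0 1) * circ a b c d p q r t *
        fromBlocks 1 0 0 (fromBlocks v 0 0 1) =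
      circ a (b * v) (u * c) (u * d * v) p q r t := by
  simp only [circ, blk3, fromBlocks_multiply, fromBlocks_mul_fromRows, fromCols_mul_fromBlocks,
    Matrix.one_mul, Matrix.mul_one, Matrix.zero_mul, Matrix.mul_zero, add_zero, zero_add,
    Matrix.mul_assoc]

/-- the `∘`-product is well defined on conjugacy classes with respect to the
first factor: if `A' = H A H⁻¹` with `H = diag(1_m,h)`, `h` invertible, then `A' ∘ P` is
conjugate to `A ∘ P` by a matrix `diag(1_m,h')` with `h'` invertible. -/
theorem stmt1 {k : Type*} [Field k] {m N : ℕ}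
    (a : Matrix (Fin m) (Fin m) k) (b : Matrix (Fin m) (Fin N) k)
    (c : Matrix (Fin N) (Fin m) k) (d : Matrix (Fin N) (Fin N) k)
    (p : Matrix (Fin m) (Fin m) k) (q : Matrix (Fin m) (Fin N) k)
    (r : Matrix (Fin N) (Fin m) k) (t : Matrix (Fin N) (Fin N) k)
    (h : Matrix (Fin N) (Fin N) k) (hh : IsUnit h) :
    ∃ h' : Matrix (Fin N ⊕ Fin N) (Fin N ⊕ Fin N) k, IsUnit h' ∧
      circ a (b * h⁻¹) (h * c) (h * d * h⁻¹) p q r t =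
        Matrix.fromBlocks (1 : Matrix (Fin m) (Fin m) k) 0 0 h' *
          circ a b c d p q r t *
          (Matrix.fromBlocks (1 : Matrix (Fin m) (Fin m) k) 0 0 h')⁻¹ := by
  have hh' : IsUnit (fromBlocks h 0 0 (1 : Matrix (Fin N) (Fin N) k)) := by
    simpa using hh
  refine ⟨fromBlocks h 0 0 1, hh', ?_⟩
  rw [inv_fromBlocks_zero_zero isUnit_one hh', inv_fromBlocks_zero_zero hh isUnit_one, inv_one,
    inv_one, fromBlocks_mul_circ_mul_fromBlocks]
end

section
/- With the star-product as defined, for any n×m matrix φ one has ([[a,b,c],[d,e,f],[g,h,j]]·[[1,φ,0],[0,1,0],[0,0,1]]) ⋆ p = (a⋆p) · Γ, where Γ is the block matrix [[1,0,0,0,0],[φu,1,φv,0,φw],[0,0,1,0,0],[0,0,0,1,0],[0,0,0,0,1]] (relative to splitting N+N+m+N+N), which lies in the parabolic-type subgroup P. -/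
/-!
Right multiplication by `[[1,φ,0],[0,1,0],[0,0,1]]` replaces the middle column blocks
`b, e, h` of `a` by `aφ + b, dφ + e, gφ + h`. In `a ⋆ p` these blocks enter only through
the products `bu, bv, bw, eu, …`, while `a, d, g` form the second column block
`(0, a, d, g, 0)ᵀ` of `a ⋆ p`. Hence the change amounts to adding that column block, multiplied
by `φu`, `φv`, `φw`, to the first, third and fifth column blocks, which is right multiplication
by `Γ`. Since `Γ` is block unitriangular, it lies in `P`.
-/

open Matrix

namespace Matrix

theorem fromRows_add {R m₁ m₂ n : Type*} [Add R] (A₁ B₁ : Matrix m₁ n R)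
    (A₂ B₂ : Matrix m₂ n R) : fromRows A₁ A₂ + fromRows B₁ B₂ = fromRows (A₁ + B₁) (A₂ + B₂) := by
  ext (i | i) j <;> rfl

theorem fromCols_add {R m n₁ n₂ : Type*} [Add R] (A₁ B₁ : Matrix m n₁ R)
    (A₂ B₂ : Matrix m n₂ R) : fromCols A₁ A₂ + fromCols B₁ B₂ = fromCols (A₁ + B₁) (A₂ + B₂) := by
  ext i (j | j) <;> rfl

end Matrix

theorem blk3_mul_blk3 {R : Type*} [NonUnitalNonAssocSemiring R]
    {i1 i2 i3 j1 j2 j3 k1 k2 k3 : Type*} [Fintype j1] [Fintype j2] [Fintype j3]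
    (A : Matrix i1 j1 R) (B : Matrix i1 j2 R) (C : Matrix i1 j3 R)
    (D : Matrix i2 j1 R) (E : Matrix i2 j2 R) (F : Matrix i2 j3 R)
    (G : Matrix i3 j1 R) (H : Matrix i3 j2 R) (J : Matrix i3 j3 R)
    (A' : Matrix j1 k1 R) (B' : Matrix j1 k2 R) (C' : Matrix j1 k3 R)
    (D' : Matrix j2 k1 R) (E' : Matrix j2 k2 R) (F' : Matrix j2 k3 R)
    (G' : Matrix j3 k1 R) (H' : Matrix j3 k2 R) (J' : Matrix j3 k3 R) :
    blk3 A B C D E F G H J * blk3 A' B' C' D' E' F' G' H' J' =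
      blk3 (A * A' + B * D' + C * G') (A * B' + B * E' + C * H') (A * C' + B * F' + C * J')
        (D * A' + E * D' + F * G') (D * B' + E * E' + F * H') (D * C' + E * F' + F * J')
        (G * A' + H * D' + J * G') (G * B' + H * E' + J * H') (G * C' + H * F' + J * J') := by
  ext (i | i | i) (k | k | k) <;>
    simp [blk3, mul_apply, Fintype.sum_sum_type, add_assoc]

/-- The block data of `A.toMatrix * blk3 1 φ 0 0 1 0 0 0 1`. -/
def Blk.mulShear {R i1 m i3 : Type*} [NonUnitalNonAssocSemiring R] [Fintype i1]
    (A : Blk R i1 m i3) (φ : Matrix i1 m R) : Blk R i1 m i3 :=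
  ⟨A.a, A.a * φ + A.b, A.c, A.d, A.d * φ + A.e, A.f, A.g, A.g * φ + A.h, A.j⟩

/-- The matrix `Γ` of the paper. -/
def starShear {R i1 m i3 j1 j3 : Type*} [Semiring R] [Fintype m]
    [DecidableEq i1] [DecidableEq m] [DecidableEq i3] [DecidableEq j1] [DecidableEq j3]
    (P : Blk R j1 m j3) (φ : Matrix i1 m R) :
    Matrix ((j1 ⊕ i1) ⊕ (m ⊕ (i3 ⊕ j3))) ((j1 ⊕ i1) ⊕ (m ⊕ (i3 ⊕ j3))) R :=
  blk3 (fromBlocks 1 0 (φ * P.d) 1) (fromRows 0 (φ * P.e)) (fromBlocks 0 0 0 (φ * P.f))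
    0 1 0 0 0 1

section Star

variable {R : Type*} [CommRing R] {i1 m i3 j1 j3 : Type*}
  [Fintype i1] [Fintype m] [Fintype i3] [Fintype j1] [Fintype j3]
  [DecidableEq i1] [DecidableEq m] [DecidableEq i3] [DecidableEq j1] [DecidableEq j3]

theorem starB_mulShear (A : Blk R i1 m i3) (P : Blk R j1 m j3) (φ : Matrix i1 m R) :
    (starB (A.mulShear φ) P).toMatrix = (starB A P).toMatrix * starShear P φ := by
  rw [starShear, Blk.toMatrix, Blk.toMatrix, blk3_mul_blk3]
  congr 1 <;>
    simp [starB, Blk.mulShear, fromBlocks_multiply, fromBlocks_mul_fromRows,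
      fromCols_mul_fromBlocks, fromCols_mul_fromRows, fromBlocks_add, fromRows_add,
      fromCols_add, Matrix.add_mul, Matrix.mul_assoc, add_comm]

theorem starShear_mem_Pset (P : Blk R j1 m j3) (φ : Matrix i1 m R) :
    starShear P φ ∈ Pset R (j1 ⊕ i1) m (i3 ⊕ j3) :=
  ⟨_, _, _, _, _, isUnit_fromBlocks_zero₁₂.mpr ⟨isUnit_one, isUnit_one⟩, isUnit_one, rfl⟩

end Star

/-- `(a · [[1,φ,0],[0,1,0],[0,0,1]]) ⋆ p = (a ⋆ p) · Γ`, where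
`Γ = [[1,0,0,0,0],[φu,1,φv,0,φw],[0,0,1,0,0],[0,0,0,1,0],[0,0,0,0,1]]` (relative to the
splitting `(N+N)+m+(N+N)`), and `Γ` lies in the parabolic-type subgroup `P`. -/
theorem stmt6 {k : Type*} [Field k] {m N : ℕ}
    (A P : Blk k (Fin N) (Fin m) (Fin N)) (φ : Matrix (Fin N) (Fin m) k) :
    (starB ⟨A.a, A.a * φ + A.b, A.c, A.d, A.d * φ + A.e, A.f,
        A.g, A.g * φ + A.h, A.j⟩ P).toMatrix
      = (starB A P).toMatrix *
        blk3 (Matrix.fromBlocks 1 0 (φ * P.d) 1) (Matrix.fromRows 0 (φ * P.e))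
          (Matrix.fromBlocks 0 0 0 (φ * P.f)) 0 (1 : Matrix (Fin m) (Fin m) k) 0 0 0 1 ∧
    blk3 (Matrix.fromBlocks 1 0 (φ * P.d) 1) (Matrix.fromRows 0 (φ * P.e))
        (Matrix.fromBlocks 0 0 0 (φ * P.f)) 0 (1 : Matrix (Fin m) (Fin m) k) 0 0 0 1
      ∈ Pset k (Fin N ⊕ Fin N) (Fin m) (Fin N ⊕ Fin N) :=
  ⟨starB_mulShear A P φ, starShear_mem_Pset P φ⟩
end

section
/- Suppose the block matrix [[p,q,r],[u,v,w],[x,y,z]] (size N+m+N) is invertible with inverse [[P,Q,R],[U,V,W],[X,Y,Z]]. Then for any m×N matrix ψ: ([[a,b,c],[d,e,f],[g,h,j]]·[[1,0,0],[0,1,ψ],[0,0,1]]) ⋆ p = (a⋆p) · Γ, where Γ = [[1,0,0,Qψ,0],[0,1,0,0,0],[0,0,1,Vψ,0],[0,0,0,1,0],[0,0,0,Yψ,1]] relative to the splitting N+N+m+N+N. -/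
open Matrix

/-!
Let `ã` be `a` placed on the inner `N + m + N` slots of the `N + N + m + N + N` splitting
(identity on the two outer slots) and `p̃` be `p` placed on slots 1, 3, 5 (identity on slots 2
and 4). Then `a ⋆ p = ã * p̃`. Right multiplication of `a` by the shear with entry `ψ` becomes
right multiplication of `ã` by the shear `s` with entry `[ψ, 0]`, so the claim reduces to
`s * p̃ = p̃ * Γ`. Both sides equal `p̃` plus `ψ` in the (3, 4) slot: on the right this is because
the middle block column `(Q, V, Y)` of `p⁻¹` satisfies `p (Q, V, Y)ᵀ = (0, 1, 0)ᵀ`.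
-/

section BlockAlgebra

variable {R : Type*}

theorem fromCols_add_fromCols [Add R] {l n₁ n₂ : Type*}
    (A B : Matrix l n₁ R) (C D : Matrix l n₂ R) :
    fromCols A C + fromCols B D = fromCols (A + B) (C + D) := by
  ext i (j | j) <;> rfl

theorem fromRows_add_fromRows [Add R] {m₁ m₂ n : Type*}
    (A B : Matrix m₁ n R) (C D : Matrix m₂ n R) :
    fromRows A C + fromRows B D = fromRows (A + B) (C + D) := by
  ext (i | i) j <;> rfl

theorem blk3_mul [Semiring R] {i1 i2 i3 j1 j2 j3 l1 l2 l3 : Type*}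
    [Fintype j1] [Fintype j2] [Fintype j3]
    (A : Matrix i1 j1 R) (B : Matrix i1 j2 R) (C : Matrix i1 j3 R)
    (D : Matrix i2 j1 R) (E : Matrix i2 j2 R) (F : Matrix i2 j3 R)
    (G : Matrix i3 j1 R) (H : Matrix i3 j2 R) (J : Matrix i3 j3 R)
    (A' : Matrix j1 l1 R) (B' : Matrix j1 l2 R) (C' : Matrix j1 l3 R)
    (D' : Matrix j2 l1 R) (E' : Matrix j2 l2 R) (F' : Matrix j2 l3 R)
    (G' : Matrix j3 l1 R) (H' : Matrix j3 l2 R) (J' : Matrix j3 l3 R) :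
    blk3 A B C D E F G H J * blk3 A' B' C' D' E' F' G' H' J' =
      blk3 (A * A' + B * D' + C * G') (A * B' + B * E' + C * H') (A * C' + B * F' + C * J')
        (D * A' + E * D' + F * G') (D * B' + E * E' + F * H') (D * C' + E * F' + F * J')
        (G * A' + H * D' + J * G') (G * B' + H * E' + J * H') (G * C' + H * F' + J * J') := by
  simp only [blk3, fromBlocks_multiply, fromCols_mul_fromRows, fromBlocks_mul_fromRows,
    fromCols_mul_fromBlocks, mul_fromCols, fromRows_mul, fromCols_fromRows_eq_fromBlocks,
    fromCols_add_fromCols, fromRows_add_fromRows, fromBlocks_add, add_assoc]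

theorem blk3_inj {i1 i2 i3 j1 j2 j3 : Type*}
    {A A' : Matrix i1 j1 R} {B B' : Matrix i1 j2 R} {C C' : Matrix i1 j3 R}
    {D D' : Matrix i2 j1 R} {E E' : Matrix i2 j2 R} {F F' : Matrix i2 j3 R}
    {G G' : Matrix i3 j1 R} {H H' : Matrix i3 j2 R} {J J' : Matrix i3 j3 R} :
    blk3 A B C D E F G H J = blk3 A' B' C' D' E' F' G' H' J' ↔
      A = A' ∧ B = B' ∧ C = C' ∧ D = D' ∧ E = E' ∧ F = F' ∧ G = G' ∧ H = H' ∧ J = J' := by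
  simp only [blk3, fromBlocks_inj, fromCols_inj.eq_iff, fromRows_inj.eq_iff]
  tauto

theorem one_eq_blk3 [Zero R] [One R] {i1 i2 i3 : Type*}
    [DecidableEq i1] [DecidableEq i2] [DecidableEq i3] :
    (1 : Matrix (i1 ⊕ (i2 ⊕ i3)) (i1 ⊕ (i2 ⊕ i3)) R) = blk3 1 0 0 0 1 0 0 0 1 := by
  ext (i | i | i) (j | j | j) <;> simp [blk3, one_apply]

def shear [Zero R] [One R] {i1 i2 i3 : Type*} [DecidableEq i1] [DecidableEq i2] [DecidableEq i3]
    (φ : Matrix i2 i3 R) : Matrix (i1 ⊕ (i2 ⊕ i3)) (i1 ⊕ (i2 ⊕ i3)) R :=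
  blk3 1 0 0 0 1 φ 0 0 1

end BlockAlgebra

namespace Blk

variable {R : Type*} [CommRing R] {i1 m i3 j1 j3 : Type*}

def mulShear_s8 [Fintype m] (A : Blk R i1 m i3) (ψ : Matrix m i3 R) : Blk R i1 m i3 :=
  ⟨A.a, A.b, A.b * ψ + A.c, A.d, A.e, A.e * ψ + A.f, A.g, A.h, A.h * ψ + A.j⟩

def embedInner [DecidableEq j1] [DecidableEq j3] (A : Blk R i1 m i3) :
    Blk R (j1 ⊕ i1) m (i3 ⊕ j3) :=
  ⟨fromBlocks 1 0 0 A.a, fromRows 0 A.b, fromBlocks 0 0 A.c 0,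
   fromCols 0 A.d, A.e, fromCols A.f 0,
   fromBlocks 0 A.g 0 0, fromRows A.h 0, fromBlocks A.j 0 0 1⟩

def embedOuter [DecidableEq i1] [DecidableEq i3] (P : Blk R j1 m j3) :
    Blk R (j1 ⊕ i1) m (i3 ⊕ j3) :=
  ⟨fromBlocks P.a 0 0 1, fromRows P.b 0, fromBlocks 0 P.c 0 0,
   fromCols P.d 0, P.e, fromCols 0 P.f,
   fromBlocks 0 0 P.g 0, fromRows 0 P.h, fromBlocks 1 0 0 P.j⟩

theorem toMatrix_starB [Fintype i1] [Fintype m] [Fintype i3] [Fintype j1] [Fintype j3]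
    [DecidableEq i1] [DecidableEq i3] [DecidableEq j1] [DecidableEq j3]
    (A : Blk R i1 m i3) (P : Blk R j1 m j3) :
    (starB A P).toMatrix = (embedInner A).toMatrix * (embedOuter P).toMatrix := by
  simp only [toMatrix, starB, embedInner, embedOuter, blk3_mul]
  congr 1 <;>
    simp only [fromBlocks_multiply, fromCols_mul_fromRows, fromRows_mul_fromCols,
      fromBlocks_mul_fromRows, fromCols_mul_fromBlocks, Matrix.zero_mul, Matrix.one_mul] <;>
    simp [fromBlocks_add, fromCols_add_fromCols, fromRows_add_fromRows]

theorem toMatrix_mulShear [Fintype i1] [Fintype m] [Fintype i3]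
    [DecidableEq i1] [DecidableEq m] [DecidableEq i3] (A : Blk R i1 m i3) (ψ : Matrix m i3 R) :
    (A.mulShear_s8 ψ).toMatrix = A.toMatrix * shear ψ := by
  simp only [toMatrix, mulShear_s8, shear, blk3_mul]
  congr 1 <;> simp [add_comm]

theorem embedInner_mulShear [Fintype m] [DecidableEq j1] [DecidableEq j3]
    (A : Blk R i1 m i3) (ψ : Matrix m i3 R) :
    embedInner (j1 := j1) (j3 := j3) (A.mulShear_s8 ψ) = (embedInner A).mulShear_s8 (fromCols ψ 0) := by
  simp only [embedInner, mulShear_s8, mk.injEq, fromRows_mul_fromCols]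
  simp [fromCols_add_fromCols, fromBlocks_add]

theorem middleColumn_of_toMatrix_mul_eq_one [Fintype i1] [Fintype m] [Fintype i3]
    [DecidableEq i1] [DecidableEq m] [DecidableEq i3] {P Q : Blk R i1 m i3}
    (h : P.toMatrix * Q.toMatrix = 1) :
    P.a * Q.b + P.b * Q.e + P.c * Q.h = 0 ∧ P.d * Q.b + P.e * Q.e + P.f * Q.h = 1 ∧
      P.g * Q.b + P.h * Q.e + P.j * Q.h = 0 := by
  rw [toMatrix, toMatrix, blk3_mul, one_eq_blk3, blk3_inj] at h
  exact ⟨h.2.1, h.2.2.2.2.1, h.2.2.2.2.2.2.2.1⟩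

theorem shear_mul_embedOuter [Fintype i1] [Fintype m] [Fintype i3] [Fintype j1] [Fintype j3]
    [DecidableEq i1] [DecidableEq m] [DecidableEq i3] [DecidableEq j1] [DecidableEq j3]
    (P Pinv : Blk R j1 m j3) (ψ : Matrix m i3 R)
    (hq : P.a * Pinv.b + P.b * Pinv.e + P.c * Pinv.h = 0)
    (hv : P.d * Pinv.b + P.e * Pinv.e + P.f * Pinv.h = 1)
    (hy : P.g * Pinv.b + P.h * Pinv.e + P.j * Pinv.h = 0) :
    shear (fromCols ψ 0) * (embedOuter P).toMatrix =
      (embedOuter P).toMatrix *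
        blk3 (1 : Matrix (j1 ⊕ i1) (j1 ⊕ i1) R) 0 (fromBlocks (Pinv.b * ψ) 0 0 0)
          0 1 (fromCols (Pinv.e * ψ) 0) 0 0 (fromBlocks 1 0 (Pinv.h * ψ) 1) := by
  simp only [toMatrix, shear, embedOuter, blk3_mul]
  congr 1 <;>
    simp only [fromBlocks_multiply, fromCols_mul_fromRows, fromRows_mul_fromCols,
      fromCols_mul_fromBlocks, Matrix.zero_mul, Matrix.one_mul] <;>
    simp [fromBlocks_add, fromCols_add_fromCols]
  all_goals
    simp only [← Matrix.mul_assoc, ← Matrix.add_mul, hq, hv, hy, Matrix.zero_mul, Matrix.one_mul]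

end Blk

theorem stmt8_general {k : Type*} [Field k] {m N : ℕ}
    (A P : Blk k (Fin N) (Fin m) (Fin N)) (Pinv : Blk k (Fin N) (Fin m) (Fin N))
    (h1 : P.toMatrix * Pinv.toMatrix = 1)
    (ψ : Matrix (Fin m) (Fin N) k) :
    (starB ⟨A.a, A.b, A.b * ψ + A.c, A.d, A.e, A.e * ψ + A.f,
        A.g, A.h, A.h * ψ + A.j⟩ P).toMatrix
      = (starB A P).toMatrix *
        blk3 1 0 (Matrix.fromBlocks (Pinv.b * ψ) 0 0 0)
          0 (1 : Matrix (Fin m) (Fin m) k) (Matrix.fromCols (Pinv.e * ψ) 0)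
          0 0 (Matrix.fromBlocks 1 0 (Pinv.h * ψ) 1) := by
  obtain ⟨hq, hv, hy⟩ := Blk.middleColumn_of_toMatrix_mul_eq_one h1
  calc _ = (Blk.embedInner (A.mulShear_s8 ψ)).toMatrix * (Blk.embedOuter P).toMatrix :=
        Blk.toMatrix_starB _ _
    _ = (Blk.embedInner A).toMatrix * (shear (fromCols ψ 0) * (Blk.embedOuter P).toMatrix) := by
      rw [Blk.embedInner_mulShear, Blk.toMatrix_mulShear, Matrix.mul_assoc]
    _ = _ := by
      rw [Blk.shear_mul_embedOuter P Pinv ψ hq hv hy, ← Matrix.mul_assoc, ← Blk.toMatrix_starB]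

/-- if `p = [[p,q,r],[u,v,w],[x,y,z]]` is invertible with inverse
`[[P,Q,R],[U,V,W],[X,Y,Z]]`, then for any `m×N` matrix `ψ`,
`(a · [[1,0,0],[0,1,ψ],[0,0,1]]) ⋆ p = (a ⋆ p) · Γ` with
`Γ = [[1,0,0,Qψ,0],[0,1,0,0,0],[0,0,1,Vψ,0],[0,0,0,1,0],[0,0,0,Yψ,1]]`. -/
theorem stmt8 {k : Type*} [Field k] {m N : ℕ}
    (A P : Blk k (Fin N) (Fin m) (Fin N)) (Pinv : Blk k (Fin N) (Fin m) (Fin N))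
    (h1 : P.toMatrix * Pinv.toMatrix = 1) (h2 : Pinv.toMatrix * P.toMatrix = 1)
    (ψ : Matrix (Fin m) (Fin N) k) :
    (starB ⟨A.a, A.b, A.b * ψ + A.c, A.d, A.e, A.e * ψ + A.f,
        A.g, A.h, A.h * ψ + A.j⟩ P).toMatrix
      = (starB A P).toMatrix *
        blk3 1 0 (Matrix.fromBlocks (Pinv.b * ψ) 0 0 0)
          0 (1 : Matrix (Fin m) (Fin m) k) (Matrix.fromCols (Pinv.e * ψ) 0)
          0 0 (Matrix.fromBlocks 1 0 (Pinv.h * ψ) 1) :=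
  stmt8_general A P Pinv h1 ψ
end

section
/- With the star-product defined by a⋆p = a·J·p·J (where J is the block swap matrix exchanging the two N-blocks on each side of the middle m-block), the operation is associative up to enlarging N: concretely, for block matrices of size N+m+N embedded into (N+N+N)+m+(N+N+N), one has (a⋆p)⋆q and a⋆(p⋆q) equal up to conjugation by a block permutation matrix of the form diag(σ,1_m,τ) where σ,τ are permutation matrices. -/
open Matrix

/-!
Both `(a ⋆ p) ⋆ q` and `a ⋆ (p ⋆ q)` nest the outer blocks of `q`, `p`, `a` around the middle
block, and their remaining blocks are products such as `a.b * p.e * q.d`, which agree by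
associativity of matrix multiplication. So after regrouping the outer index types the two
matrices are equal, and `σ = τ = 1` will do.
-/

theorem blk3_one {R i1 i2 i3 : Type*} [Semiring R]
    [DecidableEq i1] [DecidableEq i2] [DecidableEq i3] :
    blk3 (1 : Matrix i1 i1 R) 0 0 0 (1 : Matrix i2 i2 R) 0 0 0 (1 : Matrix i3 i3 R) = 1 := by
  rw [blk3, fromCols_zero, fromRows_zero, fromBlocks_one, fromBlocks_one]

theorem starB_assoc {R : Type*} [CommRing R] {m i1 i3 j1 j3 l1 l3 : Type*} [Fintype m]
    (A : Blk R i1 m i3) (P : Blk R j1 m j3) (Q : Blk R l1 m l3) :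
    (starB (starB A P) Q).toMatrix =
      reindex
        (Equiv.sumCongr (Equiv.sumAssoc l1 j1 i1)
          (Equiv.sumCongr (Equiv.refl m) (Equiv.sumAssoc i3 j3 l3).symm))
        (Equiv.sumCongr (Equiv.sumAssoc l1 j1 i1)
          (Equiv.sumCongr (Equiv.refl m) (Equiv.sumAssoc i3 j3 l3).symm))
        (starB A (starB P Q)).toMatrix := by
  ext i j
  rcases i with (i | i | i) | i | (i | i) | i <;>
  rcases j with (j | j | j) | j | (j | j) | j <;>
  simp [Blk.toMatrix, blk3, starB, fromRows_mul, mul_fromCols, reindex_apply,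
    Equiv.sumAssoc, Matrix.mul_assoc]

/-- the ⋆-multiplication is associative up to regrouping of blocks:
`(a⋆p)⋆q` and `a⋆(p⋆q)` (block matrices of splitting `(N+N+N)+m+(N+N+N)`) coincide up to
conjugation by a block permutation matrix `diag(σ,1_m,τ)` with `σ`, `τ` permutation
matrices (after the canonical identification of the two groupings of the outer blocks). -/
theorem stmt11 {k : Type*} [Field k] {m N : ℕ}
    (A P Q : Blk k (Fin N) (Fin m) (Fin N)) :
    ∃ (σ : Equiv.Perm (Fin N ⊕ (Fin N ⊕ Fin N))) (τ : Equiv.Perm ((Fin N ⊕ Fin N) ⊕ Fin N)),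
      (starB (starB A P) Q).toMatrix =
        blk3 (σ.permMatrix k) 0 0 0 (1 : Matrix (Fin m) (Fin m) k) 0 0 0 (τ.permMatrix k) *
          Matrix.reindex
            (Equiv.sumCongr (Equiv.sumAssoc (Fin N) (Fin N) (Fin N))
              (Equiv.sumCongr (Equiv.refl (Fin m))
                (Equiv.sumAssoc (Fin N) (Fin N) (Fin N)).symm))
            (Equiv.sumCongr (Equiv.sumAssoc (Fin N) (Fin N) (Fin N))
              (Equiv.sumCongr (Equiv.refl (Fin m))
                (Equiv.sumAssoc (Fin N) (Fin N) (Fin N)).symm))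
            (starB A (starB P Q)).toMatrix *
          (blk3 (σ.permMatrix k) 0 0 0 (1 : Matrix (Fin m) (Fin m) k) 0 0 0
            (τ.permMatrix k))⁻¹ := by
  refine ⟨1, 1, ?_⟩
  rw [permMatrix_one, permMatrix_one, blk3_one, inv_one, one_mul, mul_one]
  exact starB_assoc A P Q
end

section
/- The ∘-product on block matrices of size m+n given by [[a,b],[c,d]] ∘ [[p,q],[r,t]] = [[ap, b, aq],[cp, d, cq],[r, 0, t]] (size m+n+n) satisfies: the upper-left m×m block of the triple product (A∘P)∘Q equals a·p·s where a,p,s are the upper-left m×m blocks of A,P,Q, and (A∘P)∘Q = A∘(P∘Q) up to conjugation by a permutation of the non-distinguished blocks. -/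
open Matrix

/-! Both triple products are the block matrix
`[[aps, b, aq, apu], [cps, d, cq, cpu], [rs, 0, t, ru], [v, 0, 0, w]]`,
so `∘` is associative once the three trailing blocks are regrouped, and the
permutation `σ` can be taken to be the identity. -/

theorem circ_apply_inl_inl {R : Type*} [CommRing R] {m i j : Type*} [Fintype m]
    (a : Matrix m m R) (b : Matrix m i R) (c : Matrix i m R) (d : Matrix i i R)
    (p : Matrix m m R) (q : Matrix m j R) (r : Matrix j m R) (t : Matrix j j R) (x y : m) :
    circ a b c d p q r t (Sum.inl x) (Sum.inl y) = (a * p) x y :=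
  rfl

theorem circ_assoc {R : Type*} [CommRing R] {m i j l : Type*} [Fintype m]
    (a : Matrix m m R) (b : Matrix m i R) (c : Matrix i m R) (d : Matrix i i R)
    (p : Matrix m m R) (q : Matrix m j R) (r : Matrix j m R) (t : Matrix j j R)
    (s : Matrix m m R) (u : Matrix m l R) (v : Matrix l m R) (w : Matrix l l R) :
    circ (a * p) (fromCols b (a * q)) (fromRows (c * p) r) (fromBlocks d (c * q) 0 t) s u v w =
      reindex (Equiv.sumCongr (Equiv.refl m) (Equiv.sumAssoc i j l).symm)
        (Equiv.sumCongr (Equiv.refl m) (Equiv.sumAssoc i j l).symm)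
        (circ a b c d (p * s) (fromCols q (p * u)) (fromRows (r * s) v)
          (fromBlocks t (r * u) 0 w)) := by
  ext (x | (x | x) | x) (y | (y | y) | y) <;>
    simp [circ, blk3, mul_fromCols, fromRows_mul, Matrix.mul_assoc]

/-- the upper-left `m×m` block of `(A∘P)∘Q` is `a·p·s`, and
`(A∘P)∘Q = A∘(P∘Q)` up to conjugation by a block permutation matrix `diag(1_m, σ)`
permuting the three non-distinguished `n`-blocks (after the canonical regrouping). -/
theorem stmt19 {k : Type*} [Field k] {m n : ℕ}
    (a : Matrix (Fin m) (Fin m) k) (b : Matrix (Fin m) (Fin n) k)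
    (c : Matrix (Fin n) (Fin m) k) (d : Matrix (Fin n) (Fin n) k)
    (p : Matrix (Fin m) (Fin m) k) (q : Matrix (Fin m) (Fin n) k)
    (r : Matrix (Fin n) (Fin m) k) (t : Matrix (Fin n) (Fin n) k)
    (s : Matrix (Fin m) (Fin m) k) (u : Matrix (Fin m) (Fin n) k)
    (v : Matrix (Fin n) (Fin m) k) (w : Matrix (Fin n) (Fin n) k) :
    (∀ i j : Fin m,
      circ (a * p) (Matrix.fromCols b (a * q)) (Matrix.fromRows (c * p) r)
          (Matrix.fromBlocks d (c * q) 0 t) s u v w (Sum.inl i) (Sum.inl j)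
        = (a * p * s) i j) ∧
    (∃ σ : Equiv.Perm ((Fin n ⊕ Fin n) ⊕ Fin n),
      circ (a * p) (Matrix.fromCols b (a * q)) (Matrix.fromRows (c * p) r)
          (Matrix.fromBlocks d (c * q) 0 t) s u v w =
        Matrix.fromBlocks (1 : Matrix (Fin m) (Fin m) k) 0 0 (σ.permMatrix k) *
          Matrix.reindex
            (Equiv.sumCongr (Equiv.refl (Fin m)) (Equiv.sumAssoc (Fin n) (Fin n) (Fin n)).symm)
            (Equiv.sumCongr (Equiv.refl (Fin m)) (Equiv.sumAssoc (Fin n) (Fin n) (Fin n)).symm)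
            (circ a b c d (p * s) (Matrix.fromCols q (p * u)) (Matrix.fromRows (r * s) v)
              (Matrix.fromBlocks t (r * u) 0 w)) *
          (Matrix.fromBlocks (1 : Matrix (Fin m) (Fin m) k) 0 0 (σ.permMatrix k))⁻¹) := by
  refine ⟨fun x y => by rw [circ_apply_inl_inl, Matrix.mul_assoc], 1, ?_⟩
  rw [permMatrix_one, fromBlocks_one, inv_one, Matrix.one_mul, Matrix.mul_one]
  exact circ_assoc a b c d p q r t s u v w
end
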